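/- arXiv:2509.16646 — 7 statements merged into one kernel-verified Lean document; each statement's English description precedes it below -/
import Mathlib

section
/- Let n ≥ 3 and let Σ_n = (K_n, σ) be a doubly signed complete graph. Suppose there exist x, y ∈ F such that every triangle of Σ_n has double sign equal to x or to y. Then the Hamiltonian circles of Σ_n do not realize all four elements of F as double signs; that is, there exists g ∈ F such that no Hamiltonian circle of Σ_n has double sign g. -/
/-- The Klein four-group, written additively. -/
abbrev F : Type := ZMod 2 × ZMod 2

/-- The double sign of the triangle spanned by three vertices. -/
def triSign {n : ℕ} (σ : Sym2 (Fin n) → F) (a b c : Fin n) : F :=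
  σ s(a, b) + σ s(b, c) + σ s(a, c)

/-- The double sign of a walk: the sum of the labels of its edges. -/
def walkSign {n : ℕ} (σ : Sym2 (Fin n) → F) {u v : Fin n}
    (w : (⊤ : SimpleGraph (Fin n)).Walk u v) : F :=
  (w.edges.map σ).sum

/-!
Cut a Hamiltonian circle at a vertex `v`: it becomes `v a … b v` with a path `p` from `a` to `b`
avoiding `v`. Its double sign telescopes into the sum of the double signs of the `n - 2` fan
triangles `v, pᵢ, pᵢ₊₁`, because every edge `v pᵢ` is counted twice and `F` has exponent 2.
Each of these triangles has sign `x` or `y`, so the sum is `(n - 2) • y` or `(n - 2) • y + (x + y)`: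
at most two of the four elements of `F` occur.
-/

namespace SimpleGraph.Walk

variable {V : Type*} {G : SimpleGraph V}

theorem IsCycle.exists_eq_cons_concat {v : V} {w : G.Walk v v} (hw : w.IsCycle) :
    ∃ (a b : V) (ha : G.Adj v a) (p : G.Walk a b) (hb : G.Adj b v),
      w = cons ha (p.concat hb) ∧ v ∉ p.support := by
  cases w with
  | nil => exact absurd hw not_isCycle_nil
  | cons ha q =>
    cases q with
    | nil => exact absurd ha (G.loopless.irrefl _)
    | cons ha' q =>
      obtain ⟨b, p, hb, hq⟩ := exists_cons_eq_concat ha' q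
      refine ⟨_, b, ha, p, hb, hq ▸ rfl, fun hv => ?_⟩
      have hnodup := ((cons_isCycle_iff _ _).1 hw).1.support_nodup
      rw [hq, support_concat] at hnodup
      exact List.disjoint_of_nodup_append hnodup hv (List.mem_singleton_self v)

end SimpleGraph.Walk

theorem List.sum_eq_or_of_forall_eq_or {G : Type*} [AddCommGroup G] (hG : ∀ z : G, z + z = 0)
    {x y : G} {l : List G} (h : ∀ z ∈ l, z = x ∨ z = y) :
    l.sum = l.length • y ∨ l.sum = l.length • y + (x + y) := by
  induction l with
  | nil => simp
  | cons z l ih =>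
    rw [List.forall_mem_cons] at h
    rw [List.sum_cons, List.length_cons, succ_nsmul']
    rcases h.1 with hz | hz <;> rcases ih h.2 with hl | hl <;> rw [hz, hl]
    · right; linear_combination (norm := abel) -hG y
    · left; linear_combination (norm := abel) hG x
    · left; abel
    · right; abel

open SimpleGraph.Walk

section walkSign

variable {n : ℕ} (σ : Sym2 (Fin n) → F)

theorem walkSign_cons {u v w : Fin n} (h : (⊤ : SimpleGraph (Fin n)).Adj u v)
    (p : (⊤ : SimpleGraph (Fin n)).Walk v w) :
    walkSign σ (cons h p) = σ s(u, v) + walkSign σ p := by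
  simp [walkSign]

theorem walkSign_concat {u v w : Fin n} (p : (⊤ : SimpleGraph (Fin n)).Walk u v)
    (h : (⊤ : SimpleGraph (Fin n)).Adj v w) :
    walkSign σ (p.concat h) = walkSign σ p + σ s(v, w) := by
  simp [walkSign, edges_concat]

theorem add_walkSign_add_eq_sum_triSign (r : Fin n) {a b : Fin n}
    (p : (⊤ : SimpleGraph (Fin n)).Walk a b) :
    σ s(r, a) + walkSign σ p + σ s(r, b) = (p.darts.map fun d => triSign σ r d.fst d.snd).sum := by
  induction p with
  | nil => simpa [walkSign] using CharTwo.add_self_eq_zero _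
  | @cons a c b h q ih =>
    rw [walkSign_cons, darts_cons, List.map_cons, List.sum_cons, ← ih, triSign]
    linear_combination (norm := abel) -CharTwo.add_self_eq_zero (σ s(r, c))

theorem add_walkSign_add_eq_or {x y : F}
    (htri : ∀ a b c : Fin n, a ≠ b → a ≠ c → b ≠ c →
      triSign σ a b c = x ∨ triSign σ a b c = y)
    {r a b : Fin n} (p : (⊤ : SimpleGraph (Fin n)).Walk a b) (hr : r ∉ p.support) :
    σ s(r, a) + walkSign σ p + σ s(r, b) = p.length • y ∨
      σ s(r, a) + walkSign σ p + σ s(r, b) = p.length • y + (x + y) := by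
  rw [add_walkSign_add_eq_sum_triSign, ← length_darts,
    ← List.length_map (f := fun d => triSign σ r d.fst d.snd)]
  refine List.sum_eq_or_of_forall_eq_or CharTwo.add_self_eq_zero fun z hz => ?_
  obtain ⟨d, hd, rfl⟩ := List.mem_map.1 hz
  exact htri r _ _ (ne_of_mem_of_not_mem (p.dart_fst_mem_support_of_mem_darts hd) hr).symm
    (ne_of_mem_of_not_mem (p.dart_snd_mem_support_of_mem_darts hd) hr).symm d.adj.ne

end walkSign

theorem stmt0_general (n : ℕ) (σ : Sym2 (Fin n) → F) (x y : F)
    (htri : ∀ a b c : Fin n, a ≠ b → a ≠ c → b ≠ c →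
      triSign σ a b c = x ∨ triSign σ a b c = y) :
    ∃ g : F, ∀ (v : Fin n) (w : (⊤ : SimpleGraph (Fin n)).Walk v v),
      w.IsHamiltonianCycle → walkSign σ w ≠ g := by
  obtain ⟨g, hg₁, hg₂⟩ : ∃ g : F, g ≠ (n - 2) • y ∧ g ≠ (n - 2) • y + (x + y) := by
    generalize (n - 2) • y = a
    generalize x + y = b
    revert a b
    decide
  refine ⟨g, fun v w hw hwg => ?_⟩
  obtain ⟨a, b, ha, p, hb, rfl, hv⟩ := hw.isCycle.exists_eq_cons_concat
  have hlen : p.length = n - 2 := by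
    have := hw.length_eq
    simp only [length_cons, length_concat, Fintype.card_fin] at this
    omega
  rw [walkSign_cons, walkSign_concat, Sym2.eq_swap (a := b), ← add_assoc] at hwg
  rcases add_walkSign_add_eq_or σ htri p hv with h | h <;> rw [h, hlen] at hwg
  · exact hg₁ hwg.symm
  · exact hg₂ hwg.symm

theorem stmt0 (n : ℕ) (hn : 3 ≤ n) (σ : Sym2 (Fin n) → F) (x y : F)
    (htri : ∀ a b c : Fin n, a ≠ b → a ≠ c → b ≠ c →
      triSign σ a b c = x ∨ triSign σ a b c = y) :
    ∃ g : F, ∀ (v : Fin n) (w : (⊤ : SimpleGraph (Fin n)).Walk v v),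
      w.IsHamiltonianCycle → walkSign σ w ≠ g :=
  stmt0_general n σ x y htri
end

section
/- Let n ≥ 3 and let Σ_n = (K_n, σ) be a doubly signed complete graph. If there exists x ∈ F such that every triangle of Σ_n has double sign x, then every Hamiltonian circle of Σ_n has double sign equal to (n−2)·x computed in F; in particular it equals x when n is odd and 0 when n is even. -/
lemma F_add_self (y : F) : y + y = 0 := by
  ext <;> exact CharTwo.add_self_eq_zero _

lemma F_two_nsmul (y : F) : (2 : ℕ) • y = 0 := by
  rw [two_nsmul, F_add_self]

lemma F_two_zsmul (y : F) : (2 : ℤ) • y = 0 := by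
  rw [two_zsmul, F_add_self]

lemma F_two_eq_zero : (2 : F) = 0 := by decide

theorem stmt1 (n : ℕ) (hn : 3 ≤ n) (σ : Sym2 (Fin n) → F) (x : F)
    (htri : ∀ a b c : Fin n, a ≠ b → a ≠ c → b ≠ c → triSign σ a b c = x) :
    ∀ (v : Fin n) (w : (⊤ : SimpleGraph (Fin n)).Walk v v),
      w.IsHamiltonianCycle →
        walkSign σ w = (n - 2) • x ∧
        (Odd n → walkSign σ w = x) ∧
        (Even n → walkSign σ w = 0) := by
  have hn0 : (0 : ℕ) < n := by omega
  set v0 : Fin n := ⟨0, hn0⟩ with hv0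
  set g : Fin n → F := fun a => if a = v0 then x else σ s(a, v0) with hg
  have key : ∀ a b : Fin n, a ≠ b → σ s(a, b) = x + g a + g b := by
    intro a b hab
    by_cases ha : a = v0
    · subst ha
      simp only [hg, if_pos rfl, if_neg (Ne.symm hab)]
      rw [Sym2.eq_swap]
      abel_nf
      simp [F_two_nsmul, F_two_zsmul, F_two_eq_zero]
    · by_cases hb : b = v0
      · subst hb
        simp only [hg, if_pos rfl, if_neg ha]
        abel_nf
        simp [F_two_nsmul, F_two_zsmul, F_two_eq_zero]
      · have h := htri a b v0 hab ha hb
        simp only [triSign] at h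
        simp only [hg, if_neg ha, if_neg hb]
        rw [← h]
        abel_nf
        simp [F_two_nsmul, F_two_zsmul, F_two_eq_zero]
  have main : ∀ (u v : Fin n) (w : (⊤ : SimpleGraph (Fin n)).Walk u v),
      walkSign σ w = w.length • x + g u + g v := by
    intro u v w
    induction w with
    | nil => simp [walkSign, F_add_self]
    | cons h p ih =>
      rename_i a b c
      have hab : a ≠ b := h
      simp only [walkSign, SimpleGraph.Walk.edges_cons, List.map_cons, List.sum_cons,
        SimpleGraph.Walk.length_cons] at *
      rw [ih, key a b hab, succ_nsmul]
      have : x + g a + g b + (p.length • x + g b + g c)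
          = p.length • x + x + g a + g c + (g b + g b) := by abel
      rw [this, F_add_self, add_zero]
  intro v w hw
  have hlen : w.length = n := by
    rw [hw.length_eq, Fintype.card_fin]
  have hx2 : (2 : ℕ) • x = 0 := by rw [two_nsmul, F_add_self]
  have hwv : walkSign σ w = n • x := by
    rw [main v v w, hlen, add_assoc, F_add_self, add_zero]
  have hmain : walkSign σ w = (n - 2) • x := by
    rw [hwv]
    have : n = (n - 2) + 2 := by omega
    conv_lhs => rw [this]
    rw [add_nsmul, hx2, add_zero]
  refine ⟨hmain, ?_, ?_⟩
  · rintro ⟨k, hk⟩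
    rw [hwv, hk]
    have : 2 * k + 1 = 1 + k * 2 := by ring
    rw [this, add_nsmul, mul_nsmul, one_nsmul]
    simp [F_two_nsmul, F_two_eq_zero]
  · rintro ⟨k, hk⟩
    rw [hwv, hk, ← two_mul, mul_comm, mul_nsmul]
    simp [F_two_nsmul, F_two_eq_zero]
end

section
/- Let Σ_n = (K_n, σ) be a doubly signed complete graph with n ≥ 4. If the set of double signs realized by all triangles of Σ_n has at most three elements, then for every four distinct vertices of Σ_n, the four triangles spanned by these four vertices realize at most two distinct double signs. -/
theorem stmt3 (n : ℕ) (hn : 4 ≤ n) (σ : Sym2 (Fin n) → F)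
    (h : Set.ncard {g : F | ∃ a b c : Fin n,
        a ≠ b ∧ a ≠ c ∧ b ≠ c ∧ triSign σ a b c = g} ≤ 3) :
    ∀ a b c d : Fin n, a ≠ b → a ≠ c → a ≠ d → b ≠ c → b ≠ d → c ≠ d →
      Set.ncard ({triSign σ a b c, triSign σ a b d,
        triSign σ a c d, triSign σ b c d} : Set F) ≤ 2 := by
  intro a b c d hab hac had hbc hbd hcd
  have h2 : ∀ x : F, x + x = 0 := by decide
  have hneg : ∀ x : F, -x = x := by decide
  have key : ∀ x y : F, x + y = 0 → x = y := by
    intro x y hxy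
    have : x = -y := eq_neg_of_add_eq_zero_left hxy
    rw [this, hneg]
  set t1 := triSign σ a b c with ht1
  set t2 := triSign σ a b d with ht2
  set t3 := triSign σ a c d with ht3
  set t4 := triSign σ b c d with ht4
  have hsum : t1 + t2 + t3 + t4 = 0 := by
    rw [ht1, ht2, ht3, ht4]
    simp only [triSign]
    have e1 := h2 (σ s(a,b)); have e2 := h2 (σ s(b,c)); have e3 := h2 (σ s(a,c))
    have e4 := h2 (σ s(b,d)); have e5 := h2 (σ s(a,d)); have e6 := h2 (σ s(c,d))
    abel_nf
    abel_nf at e1 e2 e3 e4 e5 e6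
    rw [show (2:ℤ) = 1 + 1 by norm_num] at *
    simp [add_smul, one_smul] at *
    simp [e1, e2, e3, e4, e5, e6]
  have hpair : ∀ x y : F, ({x, y} : Set F).ncard ≤ 2 := by
    intro x y
    have := Set.ncard_insert_le x ({y} : Set F)
    simpa using this
  by_cases h12 : t1 = t2
  · have h34 : t3 = t4 := by
      apply key
      have : t1 + t2 = 0 := by rw [← h12]; exact h2 t1
      calc t3 + t4 = (t1 + t2) + (t3 + t4) := by rw [this, zero_add]
        _ = t1 + t2 + t3 + t4 := by abel
        _ = 0 := hsum
    have : ({t1, t2, t3, t4} : Set F) = {t1, t3} := by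
      rw [← h12, ← h34]; simp [Set.insert_comm]
    rw [this]; exact hpair t1 t3
  by_cases h13 : t1 = t3
  · have h24 : t2 = t4 := by
      apply key
      have : t1 + t3 = 0 := by rw [← h13]; exact h2 t1
      calc t2 + t4 = (t1 + t3) + (t2 + t4) := by rw [this, zero_add]
        _ = t1 + t2 + t3 + t4 := by abel
        _ = 0 := hsum
    have : ({t1, t2, t3, t4} : Set F) = {t1, t2} := by
      rw [← h13, ← h24]; simp [Set.insert_comm]
    rw [this]; exact hpair t1 t2
  by_cases h14 : t1 = t4
  · have h23 : t2 = t3 := by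
      apply key
      have : t1 + t4 = 0 := by rw [← h14]; exact h2 t1
      calc t2 + t3 = (t1 + t4) + (t2 + t3) := by rw [this, zero_add]
        _ = t1 + t2 + t3 + t4 := by abel
        _ = 0 := hsum
    have : ({t1, t2, t3, t4} : Set F) = {t1, t2} := by
      rw [← h14, ← h23]; simp [Set.insert_comm, Set.pair_comm]
    rw [this]; exact hpair t1 t2
  · -- all four values distinct: contradicts the global bound of 3
    exfalso
    have h23 : t2 ≠ t3 := by
      intro e
      apply h14; apply key
      have e0 : t2 + t3 = 0 := by rw [← e]; exact h2 t2
      calc t1 + t4 = (t2 + t3) + (t1 + t4) := by rw [e0, zero_add]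
        _ = t1 + t2 + t3 + t4 := by abel
        _ = 0 := hsum
    have h24 : t2 ≠ t4 := by
      intro e
      apply h13; apply key
      have e0 : t2 + t4 = 0 := by rw [← e]; exact h2 t2
      calc t1 + t3 = (t2 + t4) + (t1 + t3) := by rw [e0, zero_add]
        _ = t1 + t2 + t3 + t4 := by abel
        _ = 0 := hsum
    have h34 : t3 ≠ t4 := by
      intro e
      apply h12; apply key
      have e0 : t3 + t4 = 0 := by rw [← e]; exact h2 t3
      calc t1 + t2 = (t3 + t4) + (t1 + t2) := by rw [e0, zero_add]
        _ = t1 + t2 + t3 + t4 := by abel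
        _ = 0 := hsum
    have hsub : ({t1, t2, t3, t4} : Set F) ⊆
        {g : F | ∃ a b c : Fin n, a ≠ b ∧ a ≠ c ∧ b ≠ c ∧ triSign σ a b c = g} := by
      intro x hx
      simp only [Set.mem_insert_iff, Set.mem_singleton_iff] at hx
      rcases hx with rfl | rfl | rfl | rfl
      · exact ⟨a, b, c, hab, hac, hbc, ht1.symm⟩
      · exact ⟨a, b, d, hab, had, hbd, ht2.symm⟩
      · exact ⟨a, c, d, hac, had, hcd, ht3.symm⟩
      · exact ⟨b, c, d, hbc, hbd, hcd, ht4.symm⟩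
    have hcard : ({t1, t2, t3, t4} : Set F).ncard = 4 := by
      rw [Set.ncard_insert_of_notMem (by simp [h12, h13, h14]),
          Set.ncard_insert_of_notMem (by simp [h23, h24]),
          Set.ncard_pair h34]
    have := Set.ncard_le_ncard hsub (Set.toFinite _)
    omega
end

section
/- Let Σ_n = (K_n, σ) be a doubly signed complete graph and let v be a vertex such that every edge incident with v has label 0 ∈ F. If the complete graph K_n − v on the remaining vertices contains a (simple) path whose edges realize all four elements of F as labels, then for every g ∈ F there exists a Hamiltonian circle of Σ_n with double sign g. -/
/-!
Complete the path `p` (which avoids `v`) by the remaining vertices other than `v` to a cyclic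
order `L₀` of all vertices but `v`, with double sign `c`. Inserting `v` between the ends `x, y`
of an edge of `p` gives a Hamiltonian circle, whose double sign is `c - σ(xy)` because the edges
at `v` are labelled `0`. Since every element of `F` is a label on `p`, picking the edge with
label `c - g` produces the sign `g`.
-/

open SimpleGraph

section ChainSign

variable {α M : Type*} [AddCommMonoid M] (σ : Sym2 α → M)

def chainSign : List α → M
  | a :: b :: l => σ s(a, b) + chainSign (b :: l)
  | _ => 0

theorem chainSign_append_cons (A : List α) (m : α) (B : List α) :
    chainSign σ (A ++ m :: B) = chainSign σ (A ++ [m]) + chainSign σ (m :: B) := by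
  induction A with
  | nil => simp [chainSign]
  | cons a A ih =>
    cases A with
    | nil => simp [chainSign]
    | cons a' A' =>
      simp only [List.cons_append] at ih ⊢
      rw [chainSign, chainSign, ih, add_assoc]

theorem chainSign_insert (A : List α) (x v y : α) (B : List α) :
    chainSign σ (A ++ x :: v :: y :: B) + σ s(x, y) =
      chainSign σ (A ++ x :: y :: B) + σ s(x, v) + σ s(v, y) := by
  rw [chainSign_append_cons, chainSign_append_cons σ A x (y :: B)]
  simp only [chainSign]
  abel

end ChainSign

theorem walkSign_eq_chainSign {n : ℕ} (σ : Sym2 (Fin n) → F) {u t : Fin n}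
    (w : (⊤ : SimpleGraph (Fin n)).Walk u t) : walkSign σ w = chainSign σ w.support := by
  induction w with
  | nil => simp [walkSign, chainSign]
  | cons h p ih =>
    rw [Walk.support_cons, ← p.cons_tail_support, chainSign, p.cons_tail_support, ← ih]
    simp [walkSign]

theorem List.take_one_append_cons {α : Type*} (A : List α) (x : α) (B : List α) :
    (A ++ x :: B).take 1 = (A ++ [x]).take 1 := by
  cases A <;> simp

theorem List.exists_nodup_append_forall_mem {α : Type*} [Fintype α] {s : List α}
    (hs : s.Nodup) : ∃ r : List α, (s ++ r).Nodup ∧ ∀ z, z ∈ s ++ r := by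
  classical
  refine ⟨(Finset.univ \ s.toFinset).toList, ?_, fun z => ?_⟩
  · rw [List.nodup_append]
    refine ⟨hs, Finset.nodup_toList _, ?_⟩
    intro a ha b hb hab
    subst hab
    simp_all
  · by_cases hz : z ∈ s <;> simp [hz]

namespace SimpleGraph.Walk

variable {V : Type*} {G : SimpleGraph V}

theorem exists_support_eq_of_mem_edges {u w : V} {p : G.Walk u w} {e : Sym2 V}
    (he : e ∈ p.edges) :
    ∃ (A : List V) (x y : V) (B : List V), p.support = A ++ x :: y :: B ∧ e = s(x, y) := by
  induction e using Sym2.ind with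
  | h x y =>
  rcases infix_support_iff_mem_edges.mpr he with ⟨A, B, hAB⟩ | ⟨A, B, hAB⟩
  · exact ⟨A, x, y, B, by simp [← hAB], rfl⟩
  · exact ⟨A, y, x, B, by simp [← hAB], Sym2.eq_swap⟩

/-- `L.take 1` is `[L.head]`, written so that no nonemptiness proof is needed. -/
theorem exists_isHamiltonianCycle_top [DecidableEq V] {L : List V} (hnd : L.Nodup)
    (hcov : ∀ z, z ∈ L) (hlen : 3 ≤ L.length) :
    ∃ (u : V) (w : (⊤ : SimpleGraph V).Walk u u),
      w.IsHamiltonianCycle ∧ w.support = L ++ L.take 1 := by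
  obtain _ | ⟨u, _ | ⟨x, l⟩⟩ := L
  · simp at hlen
  · simp at hlen
  have hnd' : (x :: l ++ [u]).Nodup := (List.perm_middle.trans (by simp)).nodup_iff.mpr hnd
  have hchain : (x :: l ++ [u]).IsChain (⊤ : SimpleGraph V).Adj :=
    hnd'.isChain.imp fun _ _ h => (top_adj _ _).mpr h
  have hux : (⊤ : SimpleGraph V).Adj u x := by
    simp only [List.nodup_cons, List.mem_cons, not_or] at hnd
    exact hnd.1.1
  obtain ⟨P, hPs⟩ : ∃ P : (⊤ : SimpleGraph V).Walk x u, P.support = x :: l ++ [u] :=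
    ⟨(ofSupport _ (List.cons_ne_nil _ _) hchain).copy rfl (by simp),
      (support_copy _ _ _).trans (support_ofSupport _ _)⟩
  refine ⟨u, cons hux P, ?_, by simp [hPs]⟩
  rw [isHamiltonianCycle_iff_isCycle_and_support_count_tail_eq_one]
  refine ⟨isCycle_iff_isPath_tail_and_le_length.mpr ⟨?_, ?_⟩, fun z => ?_⟩
  · simpa [isPath_def, hPs] using hnd'
  · have := congrArg List.length hPs
    simp only [length_support, List.length_append, List.length_cons] at this hlen
    simp only [length_cons]
    omega
  · rw [support_cons, List.tail_cons, hPs]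
    exact List.count_eq_one_of_mem hnd' (by simpa [or_comm, or_left_comm] using hcov z)

end SimpleGraph.Walk

theorem stmt7 (n : ℕ) (σ : Sym2 (Fin n) → F) (v : Fin n)
    (hv : ∀ u : Fin n, u ≠ v → σ s(v, u) = 0)
    (hpath : ∃ (a b : Fin n) (p : (⊤ : SimpleGraph (Fin n)).Walk a b),
      p.IsPath ∧ v ∉ p.support ∧ ∀ g : F, ∃ e ∈ p.edges, σ e = g) :
    ∀ g : F, ∃ (u : Fin n) (w : (⊤ : SimpleGraph (Fin n)).Walk u u),
      w.IsHamiltonianCycle ∧ walkSign σ w = g := by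
  obtain ⟨a, b, p, hp, hvp, hlabels⟩ := hpath
  intro g
  obtain ⟨R, hnd, hcov⟩ :=
    List.exists_nodup_append_forall_mem (List.nodup_cons.mpr ⟨hvp, hp.support_nodup⟩)
  set L₀ := p.support ++ R
  obtain ⟨e, he, hσe⟩ := hlabels (chainSign σ (L₀ ++ L₀.take 1) - g)
  obtain ⟨A, x, y, B, hsupp, rfl⟩ := Walk.exists_support_eq_of_mem_edges he
  have hxv : x ≠ v := by rintro rfl; simp [hsupp] at hvp
  have hyv : y ≠ v := by rintro rfl; simp [hsupp] at hvp
  set L := A ++ x :: v :: y :: (B ++ R)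
  have hperm : L.Perm (v :: p.support ++ R) := by
    rw [hsupp]
    simpa [L] using List.perm_middle (l₁ := A ++ [x]) (a := v) (l₂ := y :: (B ++ R))
  obtain ⟨u, w, hw, hwsupp⟩ := Walk.exists_isHamiltonianCycle_top (hperm.nodup_iff.mpr hnd)
    (fun z => hperm.mem_iff.mpr (hcov z)) (by simp [L]; omega)
  refine ⟨u, w, hw, ?_⟩
  have hinsert := chainSign_insert σ A x v y (B ++ R ++ (A ++ [x]).take 1)
  rw [hσe, Sym2.eq_swap, hv x hxv, hv y hyv] at hinsert
  rw [walkSign_eq_chainSign, hwsupp]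
  simp only [L₀, L, hsupp, List.append_assoc, List.cons_append, List.take_one_append_cons]
    at hinsert ⊢
  linear_combination hinsert
end

section
/- Let σ be an edge labeling of K_4 by F such that the four triangles of K_4 have pairwise distinct double signs. Then for every g ∈ F, the number of Hamiltonian paths of K_4 (undirected; there are 12 in total) whose double sign equals g is even. -/
/-- The four triangles of `K₄` have pairwise distinct double signs (a `Σ₄*`). -/
def DistinctTriSigns (σ : Sym2 (Fin 4) → F) : Prop :=
  triSign σ 0 1 2 ≠ triSign σ 0 1 3 ∧ triSign σ 0 1 2 ≠ triSign σ 0 2 3 ∧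
  triSign σ 0 1 2 ≠ triSign σ 1 2 3 ∧ triSign σ 0 1 3 ≠ triSign σ 0 2 3 ∧
  triSign σ 0 1 3 ≠ triSign σ 1 2 3 ∧ triSign σ 0 2 3 ≠ triSign σ 1 2 3

/-- The double sign of the Hamiltonian path `π 0 — π 1 — π 2 — π 3` of `K₄`;
every Hamiltonian path of `K₄` arises this way from a permutation of the vertices. -/
def permPathSign (σ : Sym2 (Fin 4) → F) (π : Equiv.Perm (Fin 4)) : F :=
  σ s(π 0, π 1) + σ s(π 1, π 2) + σ s(π 2, π 3)

abbrev Q4 : Type := Fin 4 × Fin 4 × Fin 4 × Fin 4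

def qDistinct (q : Q4) : Prop :=
  q.1 ≠ q.2.1 ∧ q.1 ≠ q.2.2.1 ∧ q.1 ≠ q.2.2.2 ∧ q.2.1 ≠ q.2.2.1 ∧
  q.2.1 ≠ q.2.2.2 ∧ q.2.2.1 ≠ q.2.2.2

instance : DecidablePred qDistinct := fun _ => by unfold qDistinct; infer_instance

def q12 : List Q4 :=
  [(0,1,2,3), (0,1,3,2), (0,2,1,3), (0,2,3,1), (0,3,1,2), (0,3,2,1),
   (1,0,2,3), (1,0,3,2), (1,2,0,3), (1,3,0,2), (2,0,1,3), (2,1,0,3)]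

def Q12 : Finset Q4 := ⟨(q12 : Multiset Q4), by decide⟩

lemma Q12_eq : (Finset.univ.filter (fun q : Q4 => qDistinct q ∧ q.1 < q.2.2.2)) = Q12 := by
  decide

/-- Edge-value table from six values. -/
def ev (x01 x02 x03 x12 x13 x23 : F) : Fin 4 → Fin 4 → F := fun a b =>
  match a, b with
  | 0, 1 => x01 | 1, 0 => x01
  | 0, 2 => x02 | 2, 0 => x02
  | 0, 3 => x03 | 3, 0 => x03
  | 1, 2 => x12 | 2, 1 => x12
  | 1, 3 => x13 | 3, 1 => x13
  | 2, 3 => x23 | 3, 2 => x23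
  | _, _ => 0

/-- Number of (ordered-once) Hamiltonian paths of sign `g`, from six edge values. -/
def cnt (x01 x02 x03 x12 x13 x23 g : F) : ℕ :=
  (Q12.filter (fun q : Q4 =>
      ev x01 x02 x03 x12 x13 x23 q.1 q.2.1 +
      ev x01 x02 x03 x12 x13 x23 q.2.1 q.2.2.1 +
      ev x01 x02 x03 x12 x13 x23 q.2.2.1 q.2.2.2 = g)).card

set_option maxHeartbeats 4000000 in
set_option maxRecDepth 10000 in
lemma key0 (x02 x03 x12 x13 x23 g : F) : Even (cnt 0 x02 x03 x12 x13 x23 g) := by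
  revert x02 x03 x12 x13 x23 g
  decide

lemma addc (a b d g c : F) : (a + c) + (b + c) + (d + c) = g + c ↔ a + b + d = g := by
  revert a b d g c; decide

lemma shift (x01 x02 x03 x12 x13 x23 g c : F) :
    cnt (x01 + c) (x02 + c) (x03 + c) (x12 + c) (x13 + c) (x23 + c) (g + c)
      = cnt x01 x02 x03 x12 x13 x23 g := by
  unfold cnt
  congr 1
  apply Finset.filter_congr
  intro q hq
  fin_cases hq <;> exact addc _ _ _ g c

lemma key (x01 x02 x03 x12 x13 x23 g : F) : Even (cnt x01 x02 x03 x12 x13 x23 g) := by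
  have h0 : x01 + x01 = 0 := by revert x01; decide
  have := shift x01 x02 x03 x12 x13 x23 g x01
  rw [h0] at this
  rw [← this]
  exact key0 _ _ _ _ _ _

set_option maxRecDepth 10000 in
lemma hmemQ : ∀ q : Q4, q ∈ Q12 → qDistinct q := by decide

lemma card_filter_list (p : Q4 → Prop) [DecidablePred p] :
    (Q12.filter p).card = (q12.filter (fun a => decide (p a))).length := by
  rfl

theorem stmt11 (σ : Sym2 (Fin 4) → F) (h : DistinctTriSigns σ) (g : F) :
    Even ((Finset.univ.filter (fun π : Equiv.Perm (Fin 4) =>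
      π 0 < π 3 ∧ permPathSign σ π = g)).card) := by
  classical
  have hcard : (Finset.univ.filter (fun π : Equiv.Perm (Fin 4) =>
      π 0 < π 3 ∧ permPathSign σ π = g)).card
      = (Finset.univ.filter (fun q : Q4 => (qDistinct q ∧ q.1 < q.2.2.2) ∧
          σ s(q.1, q.2.1) + σ s(q.2.1, q.2.2.1) + σ s(q.2.2.1, q.2.2.2) = g)).card := by
    apply Finset.card_bij (fun π _ => ((π 0, π 1, π 2, π 3) : Q4))
    · intro π hπ
      simp only [Finset.mem_filter, Finset.mem_univ, true_and] at hπ ⊢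
      refine ⟨⟨?_, hπ.1⟩, hπ.2⟩
      refine ⟨?_, ?_, ?_, ?_, ?_, ?_⟩ <;>
        · intro hEq
          have := π.injective hEq
          simp_all
    · intro π₁ h₁ π₂ h₂ hEq
      simp only [Prod.mk.injEq] at hEq
      ext x
      fin_cases x <;> simp_all
    · intro q hq
      simp only [Finset.mem_filter, Finset.mem_univ, true_and] at hq
      obtain ⟨⟨hd, hlt⟩, hsign⟩ := hq
      obtain ⟨h1, h2, h3, h4, h5, h6⟩ := hd
      have hinj : Function.Injective (![q.1, q.2.1, q.2.2.1, q.2.2.2] : Fin 4 → Fin 4) := by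
        intro x y hxy
        fin_cases x <;> fin_cases y <;> simp_all
      refine ⟨Equiv.ofBijective _ ((Finite.injective_iff_bijective).mp hinj), ?_, ?_⟩
      · simp only [Finset.mem_filter, Finset.mem_univ, true_and]
        exact ⟨hlt, hsign⟩
      · rfl
  have hEv : ∀ a b : Fin 4, a ≠ b →
      σ s(a, b) = ev (σ s(0,1)) (σ s(0,2)) (σ s(0,3)) (σ s(1,2)) (σ s(1,3)) (σ s(2,3)) a b := by
    intro a b hab
    fin_cases a <;> fin_cases b <;>
      first
        | exact absurd rfl hab
        | rfl
        | exact congrArg σ Sym2.eq_swap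
  rw [hcard, ← Finset.filter_filter, Q12_eq]
  have hcongr : Q12.filter (fun q : Q4 =>
        σ s(q.1, q.2.1) + σ s(q.2.1, q.2.2.1) + σ s(q.2.2.1, q.2.2.2) = g)
      = Q12.filter (fun q : Q4 =>
        ev (σ s(0,1)) (σ s(0,2)) (σ s(0,3)) (σ s(1,2)) (σ s(1,3)) (σ s(2,3)) q.1 q.2.1 +
        ev (σ s(0,1)) (σ s(0,2)) (σ s(0,3)) (σ s(1,2)) (σ s(1,3)) (σ s(2,3)) q.2.1 q.2.2.1 +
        ev (σ s(0,1)) (σ s(0,2)) (σ s(0,3)) (σ s(1,2)) (σ s(1,3)) (σ s(2,3)) q.2.2.1 q.2.2.2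
          = g) := by
    apply Finset.filter_congr
    intro q hq
    obtain ⟨h1, h2, h3, h4, h5, h6⟩ := hmemQ q hq
    rw [hEv _ _ h1, hEv _ _ h4, hEv _ _ h6]
  rw [hcongr]
  exact key _ _ _ _ _ _ g
end

section
/- Let σ be an edge labeling of K_4 by F such that the four triangles of K_4 have pairwise distinct double signs. Then for each vertex v of K_4, the multiset of double signs of the six Hamiltonian paths of K_4 having v as an endpoint is either of the form {p, p, q, q, s, s} for three pairwise distinct p, q, s ∈ F, or of the form {p, q, s, t, t, t} for pairwise distinct p, q, s, t ∈ F. -/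
/-- The multiset of double signs of the six Hamiltonian paths of `K₄`
starting at the vertex `v`. -/
def pathMultiset (σ : Sym2 (Fin 4) → F) (v : Fin 4) : Multiset F :=
  ((Finset.univ.filter (fun π : Equiv.Perm (Fin 4) => π 0 = v)).val).map
    (permPathSign σ)

lemma addself : ∀ x : F, x + x = 0 := by decide

lemma eqz : ∀ x y : F, x + y = 0 → x = y := by decide

set_option synthInstance.maxSize 2000 in
set_option synthInstance.maxHeartbeats 2000000 in
set_option maxHeartbeats 4000000 in
lemma core : ∀ V W a b : F, V ≠ 0 → W ≠ 0 → V ≠ W →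
    (∃ p q s : F, p ≠ q ∧ p ≠ s ∧ q ≠ s ∧
      ({0, b, V, V+a, W+b, W+a} : Multiset F) = {p, p, q, q, s, s}) ∨
    (∃ p q s t : F, p ≠ q ∧ p ≠ s ∧ p ≠ t ∧ q ≠ s ∧ q ≠ t ∧ s ≠ t ∧
      ({0, b, V, V+a, W+b, W+a} : Multiset F) = {p, q, s, t, t, t}) := by decide

set_option synthInstance.maxSize 2000 in
set_option synthInstance.maxHeartbeats 2000000 in
lemma key_s12 (A B C a b c : F)
    (hV : A + B + c ≠ a + b + c) (hW : A + C + b ≠ a + b + c)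
    (hVW : B + C + a ≠ a + b + c) :
    (∃ p q s : F, p ≠ q ∧ p ≠ s ∧ q ≠ s ∧
      ({A+c+a, A+b+a, B+c+b, B+a+b, C+b+c, C+a+c} : Multiset F) = {p, p, q, q, s, s}) ∨
    (∃ p q s t : F, p ≠ q ∧ p ≠ s ∧ p ≠ t ∧ q ≠ s ∧ q ≠ t ∧ s ≠ t ∧
      ({A+c+a, A+b+a, B+c+b, B+a+b, C+b+c, C+a+c} : Multiset F) = {p, q, s, t, t, t}) := by
  have huv : A + a ≠ B + b := by
    intro h0
    apply hV
    apply eqz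
    rw [show (A+B+c) + (a+b+c) = (A+a) + (B+b) + (c+c) from by ring,
      addself, add_zero, h0, addself]
  have huw : A + a ≠ C + c := by
    intro h0
    apply hW
    apply eqz
    rw [show (A+C+b) + (a+b+c) = (A+a) + (C+c) + (b+b) from by ring,
      addself, add_zero, h0, addself]
  have hvw : B + b ≠ C + c := by
    intro h0
    apply hVW
    apply eqz
    rw [show (B+C+a) + (a+b+c) = (B+b) + (C+c) + (a+a) from by ring,
      addself, add_zero, h0, addself]
  have hmap : ({A+c+a, A+b+a, B+c+b, B+a+b, C+b+c, C+a+c} : Multiset F)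
      = Multiset.map (· + ((A+a)+c))
          ({0, b+c, (A+a)+(B+b), ((A+a)+(B+b))+(a+c), ((A+a)+(C+c))+(b+c),
            ((A+a)+(C+c))+(a+c)} : Multiset F) := by
    rw [show A+c+a = 0 + ((A+a)+c) from by ring]
    rw [show A+b+a = (b+c) + ((A+a)+c) from by linear_combination - addself c]
    rw [show B+c+b = ((A+a)+(B+b)) + ((A+a)+c) from by
      linear_combination - addself A - addself a]
    rw [show B+a+b = (((A+a)+(B+b))+(a+c)) + ((A+a)+c) from by
      linear_combination - addself A - addself a - addself c]
    rw [show C+b+c = (((A+a)+(C+c))+(b+c)) + ((A+a)+c) from by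
      linear_combination - addself A - addself a - addself c]
    rw [show C+a+c = (((A+a)+(C+c))+(a+c)) + ((A+a)+c) from by
      linear_combination - addself A - addself a - addself c]
    rfl
  have hV0 : (A+a)+(B+b) ≠ 0 := fun h0 => huv (eqz _ _ h0)
  have hW0 : (A+a)+(C+c) ≠ 0 := fun h0 => huw (eqz _ _ h0)
  have hVW0 : (A+a)+(B+b) ≠ (A+a)+(C+c) := by
    intro h0
    apply hvw
    apply eqz
    have e : (B+b) + (C+c) = ((A+a)+(B+b)) + ((A+a)+(C+c)) := by
      rw [show ((A+a)+(B+b)) + ((A+a)+(C+c)) = (B+b) + (C+c) + ((A+a) + (A+a)) from by ring,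
        addself, add_zero]
    rw [e, h0, addself]
  rcases core ((A+a)+(B+b)) ((A+a)+(C+c)) (a+c) (b+c) hV0 hW0 hVW0 with
    ⟨p, q, s, h1, h2, h3, hm⟩ | ⟨p, q, s, t, h1, h2, h3, h4, h5, h6, hm⟩
  · left
    refine ⟨p + ((A+a)+c), q + ((A+a)+c), s + ((A+a)+c),
      fun hh => h1 (add_left_injective _ hh),
      fun hh => h2 (add_left_injective _ hh), fun hh => h3 (add_left_injective _ hh), ?_⟩
    rw [hmap, hm]
    rfl
  · right
    refine ⟨p + ((A+a)+c), q + ((A+a)+c), s + ((A+a)+c), t + ((A+a)+c),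
      fun hh => h1 (add_left_injective _ hh),
      fun hh => h2 (add_left_injective _ hh), fun hh => h3 (add_left_injective _ hh),
      fun hh => h4 (add_left_injective _ hh), fun hh => h5 (add_left_injective _ hh),
      fun hh => h6 (add_left_injective _ hh), ?_⟩
    rw [hmap, hm]
    rfl

theorem stmt12 (σ : Sym2 (Fin 4) → F) (h : DistinctTriSigns σ) (v : Fin 4) :
    (∃ p q s : F, p ≠ q ∧ p ≠ s ∧ q ≠ s ∧
      pathMultiset σ v = {p, p, q, q, s, s}) ∨
    (∃ p q s t : F, p ≠ q ∧ p ≠ s ∧ p ≠ t ∧ q ≠ s ∧ q ≠ t ∧ s ≠ t ∧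
      pathMultiset σ v = {p, q, s, t, t, t}) := by
  obtain ⟨h1, h2, h3, h4, h5, h6⟩ := h
  have e10 : s((1:Fin 4), (0:Fin 4)) = s(0,1) := Sym2.eq_swap
  have e20 : s((2:Fin 4), (0:Fin 4)) = s(0,2) := Sym2.eq_swap
  have e21 : s((2:Fin 4), (1:Fin 4)) = s(1,2) := Sym2.eq_swap
  have e30 : s((3:Fin 4), (0:Fin 4)) = s(0,3) := Sym2.eq_swap
  have e31 : s((3:Fin 4), (1:Fin 4)) = s(1,3) := Sym2.eq_swap
  have e32 : s((3:Fin 4), (2:Fin 4)) = s(2,3) := Sym2.eq_swap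
  have hv : v = 0 ∨ v = 1 ∨ v = 2 ∨ v = 3 := by
    revert v; decide
  rcases hv with hv | hv | hv | hv <;> subst hv
  · -- v = 0
    have hperm : ((Finset.univ.filter (fun π : Equiv.Perm (Fin 4) => π 0 = (0:Fin 4))).val) =
        {1, c[(2:Fin 4),3], c[(1:Fin 4),2], c[1,2,3], c[1,3,2], c[(1:Fin 4),3]} := by decide
    have hM : pathMultiset σ 0 =
        {σ s(0,1) + σ s(1,2) + σ s(2,3), σ s(0,1) + σ s(1,3) + σ s(3,2),
         σ s(0,2) + σ s(2,1) + σ s(1,3), σ s(0,2) + σ s(2,3) + σ s(3,1),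
         σ s(0,3) + σ s(3,1) + σ s(1,2), σ s(0,3) + σ s(3,2) + σ s(2,1)} := by
      unfold pathMultiset
      rw [hperm]
      rfl
    rw [e32, e21, e31] at hM
    rw [hM]
    refine key_s12 (σ s(0,1)) (σ s(0,2)) (σ s(0,3)) (σ s(2,3)) (σ s(1,3)) (σ s(1,2)) ?_ ?_ ?_
    · intro heq
      exact h3 (by
        show σ s(0,1) + σ s(1,2) + σ s(0,2) = σ s(1,2) + σ s(2,3) + σ s(1,3)
        linear_combination heq)
    · intro heq
      exact h5 (by
        show σ s(0,1) + σ s(1,3) + σ s(0,3) = σ s(1,2) + σ s(2,3) + σ s(1,3)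
        linear_combination heq)
    · intro heq
      exact h6 (by
        show σ s(0,2) + σ s(2,3) + σ s(0,3) = σ s(1,2) + σ s(2,3) + σ s(1,3)
        linear_combination heq)
  · -- v = 1
    have hperm : ((Finset.univ.filter (fun π : Equiv.Perm (Fin 4) => π 0 = (1:Fin 4))).val) =
        {c[(0:Fin 4),1], c[(0:Fin 4),1] * c[(2:Fin 4),3], c[0,1,2], c[0,1,2,3],
         c[0,1,3,2], c[0,1,3]} := by decide
    have hM : pathMultiset σ 1 =
        {σ s(1,0) + σ s(0,2) + σ s(2,3), σ s(1,0) + σ s(0,3) + σ s(3,2),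
         σ s(1,2) + σ s(2,0) + σ s(0,3), σ s(1,2) + σ s(2,3) + σ s(3,0),
         σ s(1,3) + σ s(3,0) + σ s(0,2), σ s(1,3) + σ s(3,2) + σ s(2,0)} := by
      unfold pathMultiset
      rw [hperm]
      rfl
    rw [e10, e32, e20, e30] at hM
    rw [hM]
    refine key_s12 (σ s(0,1)) (σ s(1,2)) (σ s(1,3)) (σ s(2,3)) (σ s(0,3)) (σ s(0,2)) ?_ ?_ ?_
    · intro heq
      exact h2 (by
        show σ s(0,1) + σ s(1,2) + σ s(0,2) = σ s(0,2) + σ s(2,3) + σ s(0,3)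
        linear_combination heq)
    · intro heq
      exact h4 (by
        show σ s(0,1) + σ s(1,3) + σ s(0,3) = σ s(0,2) + σ s(2,3) + σ s(0,3)
        linear_combination heq)
    · intro heq
      exact (Ne.symm h6) (by
        show σ s(1,2) + σ s(2,3) + σ s(1,3) = σ s(0,2) + σ s(2,3) + σ s(0,3)
        linear_combination heq)
  · -- v = 2
    have hperm : ((Finset.univ.filter (fun π : Equiv.Perm (Fin 4) => π 0 = (2:Fin 4))).val) =
        {c[0,2,1], c[0,2,3,1], c[(0:Fin 4),2], c[0,2,3],
         c[(0:Fin 4),2] * c[(1:Fin 4),3], c[0,2,1,3]} := by decide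
    have hM : pathMultiset σ 2 =
        {σ s(2,0) + σ s(0,1) + σ s(1,3), σ s(2,0) + σ s(0,3) + σ s(3,1),
         σ s(2,1) + σ s(1,0) + σ s(0,3), σ s(2,1) + σ s(1,3) + σ s(3,0),
         σ s(2,3) + σ s(3,0) + σ s(0,1), σ s(2,3) + σ s(3,1) + σ s(1,0)} := by
      unfold pathMultiset
      rw [hperm]
      rfl
    rw [e20, e31, e21, e10, e30] at hM
    rw [hM]
    refine key_s12 (σ s(0,2)) (σ s(1,2)) (σ s(2,3)) (σ s(1,3)) (σ s(0,3)) (σ s(0,1)) ?_ ?_ ?_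
    · intro heq
      exact h1 (by
        show σ s(0,1) + σ s(1,2) + σ s(0,2) = σ s(0,1) + σ s(1,3) + σ s(0,3)
        linear_combination heq)
    · intro heq
      exact (Ne.symm h4) (by
        show σ s(0,2) + σ s(2,3) + σ s(0,3) = σ s(0,1) + σ s(1,3) + σ s(0,3)
        linear_combination heq)
    · intro heq
      exact (Ne.symm h5) (by
        show σ s(1,2) + σ s(2,3) + σ s(1,3) = σ s(0,1) + σ s(1,3) + σ s(0,3)
        linear_combination heq)
  · -- v = 3
    have hperm : ((Finset.univ.filter (fun π : Equiv.Perm (Fin 4) => π 0 = (3:Fin 4))).val) =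
        {c[0,3,2,1], c[0,3,1], c[0,3,2], c[(0:Fin 4),3],
         c[0,3,1,2], c[(0:Fin 4),3] * c[(1:Fin 4),2]} := by decide
    have hM : pathMultiset σ 3 =
        {σ s(3,0) + σ s(0,1) + σ s(1,2), σ s(3,0) + σ s(0,2) + σ s(2,1),
         σ s(3,1) + σ s(1,0) + σ s(0,2), σ s(3,1) + σ s(1,2) + σ s(2,0),
         σ s(3,2) + σ s(2,0) + σ s(0,1), σ s(3,2) + σ s(2,1) + σ s(1,0)} := by
      unfold pathMultiset
      rw [hperm]
      rfl
    rw [e30, e21, e31, e10, e32, e20] at hM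
    rw [hM]
    refine key_s12 (σ s(0,3)) (σ s(1,3)) (σ s(2,3)) (σ s(1,2)) (σ s(0,2)) (σ s(0,1)) ?_ ?_ ?_
    · intro heq
      exact (Ne.symm h1) (by
        show σ s(0,1) + σ s(1,3) + σ s(0,3) = σ s(0,1) + σ s(1,2) + σ s(0,2)
        linear_combination heq)
    · intro heq
      exact (Ne.symm h2) (by
        show σ s(0,2) + σ s(2,3) + σ s(0,3) = σ s(0,1) + σ s(1,2) + σ s(0,2)
        linear_combination heq)
    · intro heq
      exact (Ne.symm h3) (by
        show σ s(1,2) + σ s(2,3) + σ s(1,3) = σ s(0,1) + σ s(1,2) + σ s(0,2)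
        linear_combination heq)
end

section
/- Let σ be an edge labeling of K_4 by F such that the four triangles of K_4 have pairwise distinct double signs, and let g, r, s, t be the four distinct elements of F. For a vertex v, let σ(𝒫_v) denote the multiset of double signs of the six Hamiltonian paths of K_4 having v as an endpoint. Then the following are equivalent: (1) there exist two distinct vertices u and w with σ(𝒫_u) = σ(𝒫_w), this common multiset containing exactly two copies of each of r, s, t; (2) exactly three edges of K_4 have label g, and these three edges either share a common vertex or form a triangle; (3) no Hamiltonian path of K_4 has double sign g. -/
set_option maxRecDepth 100000
set_option synthInstance.maxSize 2000
set_option synthInstance.maxHeartbeats 1000000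

/-- Exactly three edges of `K₄` carry the label `g`, and these three edges
either share a common vertex or form a triangle. -/
def ThreeEdgesSpecial (σ : Sym2 (Fin 4) → F) (g : F) : Prop :=
  Set.ncard {e : Sym2 (Fin 4) | ¬ e.IsDiag ∧ σ e = g} = 3 ∧
  ((∃ v : Fin 4, ∀ e : Sym2 (Fin 4), ¬ e.IsDiag → σ e = g → v ∈ e) ∨
   (∃ a b c : Fin 4, a ≠ b ∧ a ≠ c ∧ b ≠ c ∧
      {e : Sym2 (Fin 4) | ¬ e.IsDiag ∧ σ e = g} = {s(a, b), s(b, c), s(a, c)}))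

/- ### Auxiliary definitions -/

def bmat (a b c d e f : F) : Fin 4 → Fin 4 → F
  | 0, 1 => a | 1, 0 => a
  | 0, 2 => b | 2, 0 => b
  | 0, 3 => c | 3, 0 => c
  | 1, 2 => d | 2, 1 => d
  | 1, 3 => e | 3, 1 => e
  | 2, 3 => f | 3, 2 => f
  | _, _ => 0

lemma bmat_symm (a b c d e f : F) : ∀ i j : Fin 4,
    bmat a b c d e f i j = bmat a b c d e f j i := by
  intro i j; fin_cases i <;> fin_cases j <;> rfl

def build (a b c d e f : F) : Sym2 (Fin 4) → F :=
  Sym2.lift ⟨bmat a b c d e f, bmat_symm a b c d e f⟩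

def quads (v : Fin 4) : Multiset (Fin 4 × Fin 4 × Fin 4 × Fin 4) :=
  match v with
  | 0 => {(0, 1, 2, 3), (0, 1, 3, 2), (0, 2, 1, 3), (0, 2, 3, 1), (0, 3, 2, 1), (0, 3, 1, 2)}
  | 1 => {(1, 0, 2, 3), (1, 0, 3, 2), (1, 2, 0, 3), (1, 2, 3, 0), (1, 3, 2, 0), (1, 3, 0, 2)}
  | 2 => {(2, 1, 0, 3), (2, 1, 3, 0), (2, 0, 1, 3), (2, 0, 3, 1), (2, 3, 0, 1), (2, 3, 1, 0)}
  | 3 => {(3, 1, 2, 0), (3, 1, 0, 2), (3, 2, 1, 0), (3, 2, 0, 1), (3, 0, 2, 1), (3, 0, 1, 2)}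

lemma quads_eq (v : Fin 4) :
    ((Finset.univ.filter (fun π : Equiv.Perm (Fin 4) => π 0 = v)).val).map
      (fun π => (π 0, π 1, π 2, π 3)) = quads v := by
  fin_cases v <;> decide

def MS (σ : Sym2 (Fin 4) → F) (v : Fin 4) : Multiset F :=
  (quads v).map (fun q => σ s(q.1, q.2.1) + σ s(q.2.1, q.2.2.1) + σ s(q.2.2.1, q.2.2.2))

lemma pm (σ : Sym2 (Fin 4) → F) (v : Fin 4) : pathMultiset σ v = MS σ v := by
  unfold pathMultiset MS
  rw [← quads_eq, Multiset.map_map]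
  rfl

lemma quads_adj : ∀ v : Fin 4, ∀ q ∈ quads v,
    q.1 ≠ q.2.1 ∧ q.2.1 ≠ q.2.2.1 ∧ q.2.2.1 ≠ q.2.2.2 := by decide

lemma MS_congr (σ τ : Sym2 (Fin 4) → F)
    (h : ∀ i j : Fin 4, i ≠ j → σ s(i, j) = τ s(i, j)) (v : Fin 4) :
    MS σ v = MS τ v := by
  unfold MS
  refine Multiset.map_congr rfl (fun q hq => ?_)
  obtain ⟨h1, h2, h3⟩ := quads_adj v q hq
  rw [h _ _ h1, h _ _ h2, h _ _ h3]

def sigList (a b c d e f : F) : Fin 4 → List F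
  | 0 => [a+d+f, a+e+f, b+d+e, b+f+e, c+f+d, c+e+d]
  | 1 => [a+b+f, a+c+f, d+b+c, d+f+c, e+f+b, e+c+b]
  | 2 => [d+a+c, d+e+c, b+a+e, b+c+e, f+c+a, f+e+a]
  | 3 => [e+d+b, e+a+b, f+d+a, f+b+a, c+b+d, c+a+d]

def P2 (a b c d e f g : F) : Prop :=
  ((if a = g then 1 else 0) + (if b = g then 1 else 0) + (if c = g then 1 else 0) +
    (if d = g then 1 else 0) + (if e = g then 1 else 0) + (if f = g then 1 else 0) = 3) ∧
  (((d≠g∧e≠g∧f≠g) ∨ (b≠g∧c≠g∧f≠g) ∨ (a≠g∧c≠g∧e≠g) ∨ (a≠g∧b≠g∧d≠g)) ∨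
   ((d=g∧e=g∧f=g∧a≠g∧b≠g∧c≠g) ∨ (b=g∧c=g∧f=g∧a≠g∧d≠g∧e≠g) ∨
    (a=g∧c=g∧e=g∧b≠g∧d≠g∧f≠g) ∨ (a=g∧b=g∧d=g∧c≠g∧e≠g∧f≠g)))

instance P2dec (a b c d e f g : F) : Decidable (P2 a b c d e f g) := by
  unfold P2; infer_instance

def Stmt (a b c d e f g : F) : Prop :=
  (a+d+b ≠ a+e+c ∧ a+d+b ≠ b+f+c ∧ a+d+b ≠ d+f+e ∧ a+e+c ≠ b+f+c ∧
      a+e+c ≠ d+f+e ∧ b+f+c ≠ d+f+e) →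
    ((∃ u w : Fin 4, u ≠ w ∧
        (∀ x : F, Multiset.count x (↑(sigList a b c d e f u) : Multiset F) =
          Multiset.count x (↑(sigList a b c d e f w) : Multiset F)) ∧
        (∀ x : F, Multiset.count x (↑(sigList a b c d e f u) : Multiset F) =
          if x = g then 0 else 2)) ↔
      P2 a b c d e f g) ∧
    (P2 a b c d e f g ↔
      ∀ v : Fin 4, Multiset.count g (↑(sigList a b c d e f v) : Multiset F) = 0)

instance Stmtdec (a b c d e f g : F) : Decidable (Stmt a b c d e f g) := by
  unfold Stmt; infer_instance

set_option maxHeartbeats 10000000 in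
lemma mchunk0 : ∀ c d e f : F, Stmt ((0:ZMod 2),(0:ZMod 2)) ((0:ZMod 2),(0:ZMod 2)) c d e f ((0:ZMod 2),(0:ZMod 2)) := by decide

set_option maxHeartbeats 10000000 in
lemma mchunk1 : ∀ c d e f : F, Stmt ((0:ZMod 2),(0:ZMod 2)) ((0:ZMod 2),(0:ZMod 2)) c d e f ((0:ZMod 2),(1:ZMod 2)) := by decide

set_option maxHeartbeats 10000000 in
lemma mchunk2 : ∀ c d e f : F, Stmt ((0:ZMod 2),(0:ZMod 2)) ((0:ZMod 2),(0:ZMod 2)) c d e f ((1:ZMod 2),(0:ZMod 2)) := by decide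

set_option maxHeartbeats 10000000 in
lemma mchunk3 : ∀ c d e f : F, Stmt ((0:ZMod 2),(0:ZMod 2)) ((0:ZMod 2),(0:ZMod 2)) c d e f ((1:ZMod 2),(1:ZMod 2)) := by decide

set_option maxHeartbeats 10000000 in
lemma mchunk4 : ∀ c d e f : F, Stmt ((0:ZMod 2),(0:ZMod 2)) ((0:ZMod 2),(1:ZMod 2)) c d e f ((0:ZMod 2),(0:ZMod 2)) := by decide

set_option maxHeartbeats 10000000 in
lemma mchunk5 : ∀ c d e f : F, Stmt ((0:ZMod 2),(0:ZMod 2)) ((0:ZMod 2),(1:ZMod 2)) c d e f ((0:ZMod 2),(1:ZMod 2)) := by decide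

set_option maxHeartbeats 10000000 in
lemma mchunk6 : ∀ c d e f : F, Stmt ((0:ZMod 2),(0:ZMod 2)) ((0:ZMod 2),(1:ZMod 2)) c d e f ((1:ZMod 2),(0:ZMod 2)) := by decide

set_option maxHeartbeats 10000000 in
lemma mchunk7 : ∀ c d e f : F, Stmt ((0:ZMod 2),(0:ZMod 2)) ((0:ZMod 2),(1:ZMod 2)) c d e f ((1:ZMod 2),(1:ZMod 2)) := by decide

set_option maxHeartbeats 10000000 in
lemma mchunk8 : ∀ c d e f : F, Stmt ((0:ZMod 2),(0:ZMod 2)) ((1:ZMod 2),(0:ZMod 2)) c d e f ((0:ZMod 2),(0:ZMod 2)) := by decide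

set_option maxHeartbeats 10000000 in
lemma mchunk9 : ∀ c d e f : F, Stmt ((0:ZMod 2),(0:ZMod 2)) ((1:ZMod 2),(0:ZMod 2)) c d e f ((0:ZMod 2),(1:ZMod 2)) := by decide

set_option maxHeartbeats 10000000 in
lemma mchunk10 : ∀ c d e f : F, Stmt ((0:ZMod 2),(0:ZMod 2)) ((1:ZMod 2),(0:ZMod 2)) c d e f ((1:ZMod 2),(0:ZMod 2)) := by decide

set_option maxHeartbeats 10000000 in
lemma mchunk11 : ∀ c d e f : F, Stmt ((0:ZMod 2),(0:ZMod 2)) ((1:ZMod 2),(0:ZMod 2)) c d e f ((1:ZMod 2),(1:ZMod 2)) := by decide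

set_option maxHeartbeats 10000000 in
lemma mchunk12 : ∀ c d e f : F, Stmt ((0:ZMod 2),(0:ZMod 2)) ((1:ZMod 2),(1:ZMod 2)) c d e f ((0:ZMod 2),(0:ZMod 2)) := by decide

set_option maxHeartbeats 10000000 in
lemma mchunk13 : ∀ c d e f : F, Stmt ((0:ZMod 2),(0:ZMod 2)) ((1:ZMod 2),(1:ZMod 2)) c d e f ((0:ZMod 2),(1:ZMod 2)) := by decide

set_option maxHeartbeats 10000000 in
lemma mchunk14 : ∀ c d e f : F, Stmt ((0:ZMod 2),(0:ZMod 2)) ((1:ZMod 2),(1:ZMod 2)) c d e f ((1:ZMod 2),(0:ZMod 2)) := by decide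

set_option maxHeartbeats 10000000 in
lemma mchunk15 : ∀ c d e f : F, Stmt ((0:ZMod 2),(0:ZMod 2)) ((1:ZMod 2),(1:ZMod 2)) c d e f ((1:ZMod 2),(1:ZMod 2)) := by decide

set_option maxHeartbeats 10000000 in
lemma mchunk16 : ∀ c d e f : F, Stmt ((0:ZMod 2),(1:ZMod 2)) ((0:ZMod 2),(0:ZMod 2)) c d e f ((0:ZMod 2),(0:ZMod 2)) := by decide

set_option maxHeartbeats 10000000 in
lemma mchunk17 : ∀ c d e f : F, Stmt ((0:ZMod 2),(1:ZMod 2)) ((0:ZMod 2),(0:ZMod 2)) c d e f ((0:ZMod 2),(1:ZMod 2)) := by decide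

set_option maxHeartbeats 10000000 in
lemma mchunk18 : ∀ c d e f : F, Stmt ((0:ZMod 2),(1:ZMod 2)) ((0:ZMod 2),(0:ZMod 2)) c d e f ((1:ZMod 2),(0:ZMod 2)) := by decide

set_option maxHeartbeats 10000000 in
lemma mchunk19 : ∀ c d e f : F, Stmt ((0:ZMod 2),(1:ZMod 2)) ((0:ZMod 2),(0:ZMod 2)) c d e f ((1:ZMod 2),(1:ZMod 2)) := by decide

set_option maxHeartbeats 10000000 in
lemma mchunk20 : ∀ c d e f : F, Stmt ((0:ZMod 2),(1:ZMod 2)) ((0:ZMod 2),(1:ZMod 2)) c d e f ((0:ZMod 2),(0:ZMod 2)) := by decide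

set_option maxHeartbeats 10000000 in
lemma mchunk21 : ∀ c d e f : F, Stmt ((0:ZMod 2),(1:ZMod 2)) ((0:ZMod 2),(1:ZMod 2)) c d e f ((0:ZMod 2),(1:ZMod 2)) := by decide

set_option maxHeartbeats 10000000 in
lemma mchunk22 : ∀ c d e f : F, Stmt ((0:ZMod 2),(1:ZMod 2)) ((0:ZMod 2),(1:ZMod 2)) c d e f ((1:ZMod 2),(0:ZMod 2)) := by decide

set_option maxHeartbeats 10000000 in
lemma mchunk23 : ∀ c d e f : F, Stmt ((0:ZMod 2),(1:ZMod 2)) ((0:ZMod 2),(1:ZMod 2)) c d e f ((1:ZMod 2),(1:ZMod 2)) := by decide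

set_option maxHeartbeats 10000000 in
lemma mchunk24 : ∀ c d e f : F, Stmt ((0:ZMod 2),(1:ZMod 2)) ((1:ZMod 2),(0:ZMod 2)) c d e f ((0:ZMod 2),(0:ZMod 2)) := by decide

set_option maxHeartbeats 10000000 in
lemma mchunk25 : ∀ c d e f : F, Stmt ((0:ZMod 2),(1:ZMod 2)) ((1:ZMod 2),(0:ZMod 2)) c d e f ((0:ZMod 2),(1:ZMod 2)) := by decide

set_option maxHeartbeats 10000000 in
lemma mchunk26 : ∀ c d e f : F, Stmt ((0:ZMod 2),(1:ZMod 2)) ((1:ZMod 2),(0:ZMod 2)) c d e f ((1:ZMod 2),(0:ZMod 2)) := by decide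

set_option maxHeartbeats 10000000 in
lemma mchunk27 : ∀ c d e f : F, Stmt ((0:ZMod 2),(1:ZMod 2)) ((1:ZMod 2),(0:ZMod 2)) c d e f ((1:ZMod 2),(1:ZMod 2)) := by decide

set_option maxHeartbeats 10000000 in
lemma mchunk28 : ∀ c d e f : F, Stmt ((0:ZMod 2),(1:ZMod 2)) ((1:ZMod 2),(1:ZMod 2)) c d e f ((0:ZMod 2),(0:ZMod 2)) := by decide

set_option maxHeartbeats 10000000 in
lemma mchunk29 : ∀ c d e f : F, Stmt ((0:ZMod 2),(1:ZMod 2)) ((1:ZMod 2),(1:ZMod 2)) c d e f ((0:ZMod 2),(1:ZMod 2)) := by decide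

set_option maxHeartbeats 10000000 in
lemma mchunk30 : ∀ c d e f : F, Stmt ((0:ZMod 2),(1:ZMod 2)) ((1:ZMod 2),(1:ZMod 2)) c d e f ((1:ZMod 2),(0:ZMod 2)) := by decide

set_option maxHeartbeats 10000000 in
lemma mchunk31 : ∀ c d e f : F, Stmt ((0:ZMod 2),(1:ZMod 2)) ((1:ZMod 2),(1:ZMod 2)) c d e f ((1:ZMod 2),(1:ZMod 2)) := by decide

set_option maxHeartbeats 10000000 in
lemma mchunk32 : ∀ c d e f : F, Stmt ((1:ZMod 2),(0:ZMod 2)) ((0:ZMod 2),(0:ZMod 2)) c d e f ((0:ZMod 2),(0:ZMod 2)) := by decide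

set_option maxHeartbeats 10000000 in
lemma mchunk33 : ∀ c d e f : F, Stmt ((1:ZMod 2),(0:ZMod 2)) ((0:ZMod 2),(0:ZMod 2)) c d e f ((0:ZMod 2),(1:ZMod 2)) := by decide

set_option maxHeartbeats 10000000 in
lemma mchunk34 : ∀ c d e f : F, Stmt ((1:ZMod 2),(0:ZMod 2)) ((0:ZMod 2),(0:ZMod 2)) c d e f ((1:ZMod 2),(0:ZMod 2)) := by decide

set_option maxHeartbeats 10000000 in
lemma mchunk35 : ∀ c d e f : F, Stmt ((1:ZMod 2),(0:ZMod 2)) ((0:ZMod 2),(0:ZMod 2)) c d e f ((1:ZMod 2),(1:ZMod 2)) := by decide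

set_option maxHeartbeats 10000000 in
lemma mchunk36 : ∀ c d e f : F, Stmt ((1:ZMod 2),(0:ZMod 2)) ((0:ZMod 2),(1:ZMod 2)) c d e f ((0:ZMod 2),(0:ZMod 2)) := by decide

set_option maxHeartbeats 10000000 in
lemma mchunk37 : ∀ c d e f : F, Stmt ((1:ZMod 2),(0:ZMod 2)) ((0:ZMod 2),(1:ZMod 2)) c d e f ((0:ZMod 2),(1:ZMod 2)) := by decide

set_option maxHeartbeats 10000000 in
lemma mchunk38 : ∀ c d e f : F, Stmt ((1:ZMod 2),(0:ZMod 2)) ((0:ZMod 2),(1:ZMod 2)) c d e f ((1:ZMod 2),(0:ZMod 2)) := by decide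

set_option maxHeartbeats 10000000 in
lemma mchunk39 : ∀ c d e f : F, Stmt ((1:ZMod 2),(0:ZMod 2)) ((0:ZMod 2),(1:ZMod 2)) c d e f ((1:ZMod 2),(1:ZMod 2)) := by decide

set_option maxHeartbeats 10000000 in
lemma mchunk40 : ∀ c d e f : F, Stmt ((1:ZMod 2),(0:ZMod 2)) ((1:ZMod 2),(0:ZMod 2)) c d e f ((0:ZMod 2),(0:ZMod 2)) := by decide

set_option maxHeartbeats 10000000 in
lemma mchunk41 : ∀ c d e f : F, Stmt ((1:ZMod 2),(0:ZMod 2)) ((1:ZMod 2),(0:ZMod 2)) c d e f ((0:ZMod 2),(1:ZMod 2)) := by decide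

set_option maxHeartbeats 10000000 in
lemma mchunk42 : ∀ c d e f : F, Stmt ((1:ZMod 2),(0:ZMod 2)) ((1:ZMod 2),(0:ZMod 2)) c d e f ((1:ZMod 2),(0:ZMod 2)) := by decide

set_option maxHeartbeats 10000000 in
lemma mchunk43 : ∀ c d e f : F, Stmt ((1:ZMod 2),(0:ZMod 2)) ((1:ZMod 2),(0:ZMod 2)) c d e f ((1:ZMod 2),(1:ZMod 2)) := by decide

set_option maxHeartbeats 10000000 in
lemma mchunk44 : ∀ c d e f : F, Stmt ((1:ZMod 2),(0:ZMod 2)) ((1:ZMod 2),(1:ZMod 2)) c d e f ((0:ZMod 2),(0:ZMod 2)) := by decide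

set_option maxHeartbeats 10000000 in
lemma mchunk45 : ∀ c d e f : F, Stmt ((1:ZMod 2),(0:ZMod 2)) ((1:ZMod 2),(1:ZMod 2)) c d e f ((0:ZMod 2),(1:ZMod 2)) := by decide

set_option maxHeartbeats 10000000 in
lemma mchunk46 : ∀ c d e f : F, Stmt ((1:ZMod 2),(0:ZMod 2)) ((1:ZMod 2),(1:ZMod 2)) c d e f ((1:ZMod 2),(0:ZMod 2)) := by decide

set_option maxHeartbeats 10000000 in
lemma mchunk47 : ∀ c d e f : F, Stmt ((1:ZMod 2),(0:ZMod 2)) ((1:ZMod 2),(1:ZMod 2)) c d e f ((1:ZMod 2),(1:ZMod 2)) := by decide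

set_option maxHeartbeats 10000000 in
lemma mchunk48 : ∀ c d e f : F, Stmt ((1:ZMod 2),(1:ZMod 2)) ((0:ZMod 2),(0:ZMod 2)) c d e f ((0:ZMod 2),(0:ZMod 2)) := by decide

set_option maxHeartbeats 10000000 in
lemma mchunk49 : ∀ c d e f : F, Stmt ((1:ZMod 2),(1:ZMod 2)) ((0:ZMod 2),(0:ZMod 2)) c d e f ((0:ZMod 2),(1:ZMod 2)) := by decide

set_option maxHeartbeats 10000000 in
lemma mchunk50 : ∀ c d e f : F, Stmt ((1:ZMod 2),(1:ZMod 2)) ((0:ZMod 2),(0:ZMod 2)) c d e f ((1:ZMod 2),(0:ZMod 2)) := by decide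

set_option maxHeartbeats 10000000 in
lemma mchunk51 : ∀ c d e f : F, Stmt ((1:ZMod 2),(1:ZMod 2)) ((0:ZMod 2),(0:ZMod 2)) c d e f ((1:ZMod 2),(1:ZMod 2)) := by decide

set_option maxHeartbeats 10000000 in
lemma mchunk52 : ∀ c d e f : F, Stmt ((1:ZMod 2),(1:ZMod 2)) ((0:ZMod 2),(1:ZMod 2)) c d e f ((0:ZMod 2),(0:ZMod 2)) := by decide

set_option maxHeartbeats 10000000 in
lemma mchunk53 : ∀ c d e f : F, Stmt ((1:ZMod 2),(1:ZMod 2)) ((0:ZMod 2),(1:ZMod 2)) c d e f ((0:ZMod 2),(1:ZMod 2)) := by decide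

set_option maxHeartbeats 10000000 in
lemma mchunk54 : ∀ c d e f : F, Stmt ((1:ZMod 2),(1:ZMod 2)) ((0:ZMod 2),(1:ZMod 2)) c d e f ((1:ZMod 2),(0:ZMod 2)) := by decide

set_option maxHeartbeats 10000000 in
lemma mchunk55 : ∀ c d e f : F, Stmt ((1:ZMod 2),(1:ZMod 2)) ((0:ZMod 2),(1:ZMod 2)) c d e f ((1:ZMod 2),(1:ZMod 2)) := by decide

set_option maxHeartbeats 10000000 in
lemma mchunk56 : ∀ c d e f : F, Stmt ((1:ZMod 2),(1:ZMod 2)) ((1:ZMod 2),(0:ZMod 2)) c d e f ((0:ZMod 2),(0:ZMod 2)) := by decide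

set_option maxHeartbeats 10000000 in
lemma mchunk57 : ∀ c d e f : F, Stmt ((1:ZMod 2),(1:ZMod 2)) ((1:ZMod 2),(0:ZMod 2)) c d e f ((0:ZMod 2),(1:ZMod 2)) := by decide

set_option maxHeartbeats 10000000 in
lemma mchunk58 : ∀ c d e f : F, Stmt ((1:ZMod 2),(1:ZMod 2)) ((1:ZMod 2),(0:ZMod 2)) c d e f ((1:ZMod 2),(0:ZMod 2)) := by decide

set_option maxHeartbeats 10000000 in
lemma mchunk59 : ∀ c d e f : F, Stmt ((1:ZMod 2),(1:ZMod 2)) ((1:ZMod 2),(0:ZMod 2)) c d e f ((1:ZMod 2),(1:ZMod 2)) := by decide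

set_option maxHeartbeats 10000000 in
lemma mchunk60 : ∀ c d e f : F, Stmt ((1:ZMod 2),(1:ZMod 2)) ((1:ZMod 2),(1:ZMod 2)) c d e f ((0:ZMod 2),(0:ZMod 2)) := by decide

set_option maxHeartbeats 10000000 in
lemma mchunk61 : ∀ c d e f : F, Stmt ((1:ZMod 2),(1:ZMod 2)) ((1:ZMod 2),(1:ZMod 2)) c d e f ((0:ZMod 2),(1:ZMod 2)) := by decide

set_option maxHeartbeats 10000000 in
lemma mchunk62 : ∀ c d e f : F, Stmt ((1:ZMod 2),(1:ZMod 2)) ((1:ZMod 2),(1:ZMod 2)) c d e f ((1:ZMod 2),(0:ZMod 2)) := by decide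

set_option maxHeartbeats 10000000 in
lemma mchunk63 : ∀ c d e f : F, Stmt ((1:ZMod 2),(1:ZMod 2)) ((1:ZMod 2),(1:ZMod 2)) c d e f ((1:ZMod 2),(1:ZMod 2)) := by decide

set_option maxHeartbeats 4000000 in
lemma master2 : ∀ a b c d e f g : F, Stmt a b c d e f g := by
  have h4 : ∀ p : F, p = ((0:ZMod 2),(0:ZMod 2)) ∨ p = ((0:ZMod 2),(1:ZMod 2)) ∨
      p = ((1:ZMod 2),(0:ZMod 2)) ∨ p = ((1:ZMod 2),(1:ZMod 2)) := by decide
  intro a b c d e f g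
  rcases h4 a with rfl|rfl|rfl|rfl <;> rcases h4 b with rfl|rfl|rfl|rfl <;>
    rcases h4 g with rfl|rfl|rfl|rfl
  · exact mchunk0 c d e f
  · exact mchunk1 c d e f
  · exact mchunk2 c d e f
  · exact mchunk3 c d e f
  · exact mchunk4 c d e f
  · exact mchunk5 c d e f
  · exact mchunk6 c d e f
  · exact mchunk7 c d e f
  · exact mchunk8 c d e f
  · exact mchunk9 c d e f
  · exact mchunk10 c d e f
  · exact mchunk11 c d e f
  · exact mchunk12 c d e f
  · exact mchunk13 c d e f
  · exact mchunk14 c d e f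
  · exact mchunk15 c d e f
  · exact mchunk16 c d e f
  · exact mchunk17 c d e f
  · exact mchunk18 c d e f
  · exact mchunk19 c d e f
  · exact mchunk20 c d e f
  · exact mchunk21 c d e f
  · exact mchunk22 c d e f
  · exact mchunk23 c d e f
  · exact mchunk24 c d e f
  · exact mchunk25 c d e f
  · exact mchunk26 c d e f
  · exact mchunk27 c d e f
  · exact mchunk28 c d e f
  · exact mchunk29 c d e f
  · exact mchunk30 c d e f
  · exact mchunk31 c d e f
  · exact mchunk32 c d e f
  · exact mchunk33 c d e f
  · exact mchunk34 c d e f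
  · exact mchunk35 c d e f
  · exact mchunk36 c d e f
  · exact mchunk37 c d e f
  · exact mchunk38 c d e f
  · exact mchunk39 c d e f
  · exact mchunk40 c d e f
  · exact mchunk41 c d e f
  · exact mchunk42 c d e f
  · exact mchunk43 c d e f
  · exact mchunk44 c d e f
  · exact mchunk45 c d e f
  · exact mchunk46 c d e f
  · exact mchunk47 c d e f
  · exact mchunk48 c d e f
  · exact mchunk49 c d e f
  · exact mchunk50 c d e f
  · exact mchunk51 c d e f
  · exact mchunk52 c d e f
  · exact mchunk53 c d e f
  · exact mchunk54 c d e f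
  · exact mchunk55 c d e f
  · exact mchunk56 c d e f
  · exact mchunk57 c d e f
  · exact mchunk58 c d e f
  · exact mchunk59 c d e f
  · exact mchunk60 c d e f
  · exact mchunk61 c d e f
  · exact mchunk62 c d e f
  · exact mchunk63 c d e f
/- ### Bridge lemmas -/

lemma six_count : ∀ g r s t x : F, g ≠ r → g ≠ s → g ≠ t → r ≠ s → r ≠ t → s ≠ t →
    ({r, r, s, s, t, t} : Multiset F).count x = if x = g then 0 else 2 := by decide

lemma perm_forall (σ : Sym2 (Fin 4) → F) (g : F) :
    (∀ π : Equiv.Perm (Fin 4), permPathSign σ π ≠ g) ↔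
      ∀ v : Fin 4, g ∉ pathMultiset σ v := by
  constructor
  · intro h v hg
    obtain ⟨π, _, hπ⟩ := Multiset.mem_map.mp hg
    exact h π hπ
  · intro h π hg
    apply h (π 0)
    unfold pathMultiset
    rw [← hg]
    exact Multiset.mem_map_of_mem _ (by simp)

def TES' (σ : Sym2 (Fin 4) → F) (g : F) : Prop :=
  (Finset.univ.filter (fun e : Sym2 (Fin 4) => ¬ e.IsDiag ∧ σ e = g)).card = 3 ∧
  ((∃ v : Fin 4, ∀ e : Sym2 (Fin 4), ¬ e.IsDiag → σ e = g → v ∈ e) ∨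
   (∃ a b c : Fin 4, a ≠ b ∧ a ≠ c ∧ b ≠ c ∧
      ∀ e : Sym2 (Fin 4), (¬ e.IsDiag ∧ σ e = g) ↔
        (e = s(a, b) ∨ e = s(b, c) ∨ e = s(a, c))))

lemma tes_iff (σ : Sym2 (Fin 4) → F) (g : F) : ThreeEdgesSpecial σ g ↔ TES' σ g := by
  unfold ThreeEdgesSpecial TES'
  apply and_congr
  · rw [show {e : Sym2 (Fin 4) | ¬ e.IsDiag ∧ σ e = g} =
        ↑(Finset.univ.filter fun e : Sym2 (Fin 4) => ¬ e.IsDiag ∧ σ e = g) from by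
      ext e; simp, Set.ncard_coe_finset]
  · apply or_congr Iff.rfl
    constructor
    · rintro ⟨a, b, c, h1, h2, h3, h4⟩
      refine ⟨a, b, c, h1, h2, h3, fun e => ?_⟩
      rw [Set.ext_iff] at h4
      simpa using h4 e
    · rintro ⟨a, b, c, h1, h2, h3, h4⟩
      refine ⟨a, b, c, h1, h2, h3, ?_⟩
      ext e
      simpa using h4 e

lemma card_count (σ : Sym2 (Fin 4) → F) (g : F) :
    (Finset.univ.filter fun e : Sym2 (Fin 4) => ¬ e.IsDiag ∧ σ e = g).card =
      (if σ s(0,1) = g then 1 else 0) + (if σ s(0,2) = g then 1 else 0) +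
      (if σ s(0,3) = g then 1 else 0) + (if σ s(1,2) = g then 1 else 0) +
      (if σ s(1,3) = g then 1 else 0) + (if σ s(2,3) = g then 1 else 0) := by
  have hE : (Finset.univ.filter fun e : Sym2 (Fin 4) => ¬ e.IsDiag ∧ σ e = g)
      = Finset.filter (fun e => σ e = g)
        ({s(0,1), s(0,2), s(0,3), s(1,2), s(1,3), s(2,3)} : Finset (Sym2 (Fin 4))) := by
    ext e
    induction e using Sym2.ind with
    | _ i j =>
      simp only [Finset.mem_filter, Finset.mem_univ, true_and]
      fin_cases i <;> fin_cases j <;> exact and_congr_left' (by decide)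
  rw [hE]
  simp only [Finset.filter_insert, Finset.filter_singleton]
  split_ifs <;> decide
  
lemma L2 (σ : Sym2 (Fin 4) → F) (g : F) :
    (∃ v : Fin 4, ∀ e : Sym2 (Fin 4), ¬ e.IsDiag → σ e = g → v ∈ e) ↔
      ((σ s(1,2) ≠ g ∧ σ s(1,3) ≠ g ∧ σ s(2,3) ≠ g) ∨
       (σ s(0,2) ≠ g ∧ σ s(0,3) ≠ g ∧ σ s(2,3) ≠ g) ∨
       (σ s(0,1) ≠ g ∧ σ s(0,3) ≠ g ∧ σ s(1,3) ≠ g) ∨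
       (σ s(0,1) ≠ g ∧ σ s(0,2) ≠ g ∧ σ s(1,2) ≠ g)) := by
  constructor
  · rintro ⟨v, hv⟩
    fin_cases v
    · exact Or.inl ⟨fun hg => absurd (hv s(1,2) (by decide) hg) (by decide),
        fun hg => absurd (hv s(1,3) (by decide) hg) (by decide),
        fun hg => absurd (hv s(2,3) (by decide) hg) (by decide)⟩
    · exact Or.inr (Or.inl ⟨fun hg => absurd (hv s(0,2) (by decide) hg) (by decide),
        fun hg => absurd (hv s(0,3) (by decide) hg) (by decide),
        fun hg => absurd (hv s(2,3) (by decide) hg) (by decide)⟩)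
    · exact Or.inr (Or.inr (Or.inl ⟨fun hg => absurd (hv s(0,1) (by decide) hg) (by decide),
        fun hg => absurd (hv s(0,3) (by decide) hg) (by decide),
        fun hg => absurd (hv s(1,3) (by decide) hg) (by decide)⟩))
    · exact Or.inr (Or.inr (Or.inr ⟨fun hg => absurd (hv s(0,1) (by decide) hg) (by decide),
        fun hg => absurd (hv s(0,2) (by decide) hg) (by decide),
        fun hg => absurd (hv s(1,2) (by decide) hg) (by decide)⟩))
  · rintro (⟨h1,h2,h3⟩ | ⟨h1,h2,h3⟩ | ⟨h1,h2,h3⟩ | ⟨h1,h2,h3⟩) <;>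
      [refine ⟨0, fun e => ?_⟩; refine ⟨1, fun e => ?_⟩;
       refine ⟨2, fun e => ?_⟩; refine ⟨3, fun e => ?_⟩] <;>
    · induction e using Sym2.ind with
      | _ i j =>
        fin_cases i <;> fin_cases j <;> intro hd hg <;>
          first
            | exact absurd (by decide) hd
            | decide
            | exact absurd hg h1
            | exact absurd hg h2
            | exact absurd hg h3
            | exact absurd ((congrArg σ Sym2.eq_swap).trans hg) h1
            | exact absurd ((congrArg σ Sym2.eq_swap).trans hg) h2
            | exact absurd ((congrArg σ Sym2.eq_swap).trans hg) h3

lemma L3 (σ : Sym2 (Fin 4) → F) (g : F) :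
    (∃ x y z : Fin 4, x ≠ y ∧ x ≠ z ∧ y ≠ z ∧
        ∀ e : Sym2 (Fin 4), (¬ e.IsDiag ∧ σ e = g) ↔
          (e = s(x, y) ∨ e = s(y, z) ∨ e = s(x, z))) ↔
      ((σ s(1,2) = g ∧ σ s(1,3) = g ∧ σ s(2,3) = g ∧
          σ s(0,1) ≠ g ∧ σ s(0,2) ≠ g ∧ σ s(0,3) ≠ g) ∨
       (σ s(0,2) = g ∧ σ s(0,3) = g ∧ σ s(2,3) = g ∧
          σ s(0,1) ≠ g ∧ σ s(1,2) ≠ g ∧ σ s(1,3) ≠ g) ∨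
       (σ s(0,1) = g ∧ σ s(0,3) = g ∧ σ s(1,3) = g ∧
          σ s(0,2) ≠ g ∧ σ s(1,2) ≠ g ∧ σ s(2,3) ≠ g) ∨
       (σ s(0,1) = g ∧ σ s(0,2) = g ∧ σ s(1,2) = g ∧
          σ s(0,3) ≠ g ∧ σ s(1,3) ≠ g ∧ σ s(2,3) ≠ g)) := by
  constructor
  · rintro ⟨x, y, z, hxy, hxz, hyz, H⟩
    fin_cases x <;> fin_cases y <;> fin_cases z <;>
      first
        | exact absurd rfl hxy
        | exact absurd rfl hxz
        | exact absurd rfl hyz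
        | exact Or.inl ⟨((H s(1,2)).mpr (by decide)).2, ((H s(1,3)).mpr (by decide)).2,
            ((H s(2,3)).mpr (by decide)).2,
            fun hg => absurd ((H s(0,1)).mp ⟨by decide, hg⟩) (by decide),
            fun hg => absurd ((H s(0,2)).mp ⟨by decide, hg⟩) (by decide),
            fun hg => absurd ((H s(0,3)).mp ⟨by decide, hg⟩) (by decide)⟩
        | exact Or.inr (Or.inl ⟨((H s(0,2)).mpr (by decide)).2, ((H s(0,3)).mpr (by decide)).2,
            ((H s(2,3)).mpr (by decide)).2,
            fun hg => absurd ((H s(0,1)).mp ⟨by decide, hg⟩) (by decide),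
            fun hg => absurd ((H s(1,2)).mp ⟨by decide, hg⟩) (by decide),
            fun hg => absurd ((H s(1,3)).mp ⟨by decide, hg⟩) (by decide)⟩)
        | exact Or.inr (Or.inr (Or.inl ⟨((H s(0,1)).mpr (by decide)).2,
            ((H s(0,3)).mpr (by decide)).2, ((H s(1,3)).mpr (by decide)).2,
            fun hg => absurd ((H s(0,2)).mp ⟨by decide, hg⟩) (by decide),
            fun hg => absurd ((H s(1,2)).mp ⟨by decide, hg⟩) (by decide),
            fun hg => absurd ((H s(2,3)).mp ⟨by decide, hg⟩) (by decide)⟩))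
        | exact Or.inr (Or.inr (Or.inr ⟨((H s(0,1)).mpr (by decide)).2,
            ((H s(0,2)).mpr (by decide)).2, ((H s(1,2)).mpr (by decide)).2,
            fun hg => absurd ((H s(0,3)).mp ⟨by decide, hg⟩) (by decide),
            fun hg => absurd ((H s(1,3)).mp ⟨by decide, hg⟩) (by decide),
            fun hg => absurd ((H s(2,3)).mp ⟨by decide, hg⟩) (by decide)⟩))
  · rintro (⟨p1,p2,p3,n1,n2,n3⟩ | ⟨p1,p2,p3,n1,n2,n3⟩ | ⟨p1,p2,p3,n1,n2,n3⟩ |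
      ⟨p1,p2,p3,n1,n2,n3⟩) <;>
      [refine ⟨1, 2, 3, by decide, by decide, by decide, fun e => ?_⟩;
       refine ⟨0, 2, 3, by decide, by decide, by decide, fun e => ?_⟩;
       refine ⟨0, 1, 3, by decide, by decide, by decide, fun e => ?_⟩;
       refine ⟨0, 1, 2, by decide, by decide, by decide, fun e => ?_⟩] <;>
    · induction e using Sym2.ind with
      | _ i j =>
        fin_cases i <;> fin_cases j <;>
          first
            | exact iff_of_false (fun hh => hh.1 (by decide)) (by decide)
            | exact iff_of_true ⟨by decide, p1⟩ (by decide)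
            | exact iff_of_true ⟨by decide, p2⟩ (by decide)
            | exact iff_of_true ⟨by decide, p3⟩ (by decide)
            | exact iff_of_true ⟨by decide, (congrArg σ Sym2.eq_swap).trans p1⟩ (by decide)
            | exact iff_of_true ⟨by decide, (congrArg σ Sym2.eq_swap).trans p2⟩ (by decide)
            | exact iff_of_true ⟨by decide, (congrArg σ Sym2.eq_swap).trans p3⟩ (by decide)
            | exact iff_of_false (fun hh => n1 hh.2) (by decide)
            | exact iff_of_false (fun hh => n2 hh.2) (by decide)
            | exact iff_of_false (fun hh => n3 hh.2) (by decide)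
            | exact iff_of_false (fun hh => n1 ((congrArg σ Sym2.eq_swap).trans hh.2)) (by decide)
            | exact iff_of_false (fun hh => n2 ((congrArg σ Sym2.eq_swap).trans hh.2)) (by decide)
            | exact iff_of_false (fun hh => n3 ((congrArg σ Sym2.eq_swap).trans hh.2)) (by decide)

lemma tes_P2 (σ : Sym2 (Fin 4) → F) (g : F) :
    ThreeEdgesSpecial σ g ↔
      P2 (σ s(0,1)) (σ s(0,2)) (σ s(0,3)) (σ s(1,2)) (σ s(1,3)) (σ s(2,3)) g := by
  rw [tes_iff σ g]
  unfold TES' P2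
  apply and_congr
  · rw [card_count σ g]
  · exact or_congr (L2 σ g) (L3 σ g)

theorem stmt13 (σ : Sym2 (Fin 4) → F) (h : DistinctTriSigns σ) (g r s t : F)
    (hgr : g ≠ r) (hgs : g ≠ s) (hgt : g ≠ t) (hrs : r ≠ s) (hrt : r ≠ t)
    (hst : s ≠ t) :
    ((∃ u w : Fin 4, u ≠ w ∧ pathMultiset σ u = pathMultiset σ w ∧
        pathMultiset σ u = {r, r, s, s, t, t}) ↔ ThreeEdgesSpecial σ g) ∧
    (ThreeEdgesSpecial σ g ↔
      ∀ π : Equiv.Perm (Fin 4), permPathSign σ π ≠ g) := by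
  have hagree : ∀ i j : Fin 4, i ≠ j → σ s(i,j) =
      build (σ s(0,1)) (σ s(0,2)) (σ s(0,3)) (σ s(1,2)) (σ s(1,3)) (σ s(2,3)) s(i,j) := by
    intro i j hij
    fin_cases i <;> fin_cases j <;>
      first
        | exact absurd rfl hij
        | rfl
        | exact congrArg σ Sym2.eq_swap
  have hsig : ∀ v : Fin 4, pathMultiset σ v =
      ↑(sigList (σ s(0,1)) (σ s(0,2)) (σ s(0,3)) (σ s(1,2)) (σ s(1,3)) (σ s(2,3)) v) := by
    intro v
    rw [pm σ v, MS_congr σ _ hagree v]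
    fin_cases v <;> rfl
  obtain ⟨m1, m2⟩ := master2 (σ s(0,1)) (σ s(0,2)) (σ s(0,3)) (σ s(1,2)) (σ s(1,3))
    (σ s(2,3)) g h
  constructor
  · rw [tes_P2 σ g, ← m1]
    apply exists_congr; intro u
    apply exists_congr; intro w
    apply and_congr Iff.rfl
    apply and_congr
    · rw [hsig u, hsig w]
      exact Multiset.ext
    · constructor
      · intro hEq x
        rw [hsig u, Multiset.ext] at hEq
        rw [hEq x, six_count g r s t x hgr hgs hgt hrs hrt hst]
      · intro hc
        rw [hsig u]
        refine Multiset.ext.mpr fun x => ?_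
        rw [six_count g r s t x hgr hgs hgt hrs hrt hst]
        exact hc x
  · rw [tes_P2 σ g, m2, perm_forall σ g]
    apply forall_congr'; intro v
    rw [hsig v]
    exact Multiset.count_eq_zero
end
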